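/- arXiv:2103.13204 — 3 statements merged into one kernel-verified Lean document; each statement's English description precedes it below -/
import Mathlib

section
/- In the polynomial ring ℤ[λ₁,λ₂,δ₁], 36λ₂(δ₁² − 2λ₁δ₁ + 16λ₂ − 3λ₁²) ∈ (2δ₁(λ₁+δ₁), δ₁²(λ₁+δ₁), 24λ₁² − 48λ₂, 20λ₁λ₂ − 4δ₁λ₂). -/
open MvPolynomial

/-- λ₁ = X 0, λ₂ = X 1, δ₁ = X 2 in ℤ[λ₁,λ₂,δ₁]. -/
theorem stmt0 :
    (36 * X 1 * ((X 2) ^ 2 - 2 * X 0 * X 2 + 16 * X 1 - 3 * (X 0) ^ 2)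
        : MvPolynomial (Fin 3) ℤ) ∈
      Ideal.span ({2 * X 2 * (X 0 + X 2), (X 2) ^ 2 * (X 0 + X 2),
        24 * (X 0) ^ 2 - 48 * X 1, 20 * X 0 * X 1 - 4 * X 2 * X 1}
        : Set (MvPolynomial (Fin 3) ℤ)) := by
  have h1 : (2 * X 2 * (X 0 + X 2) : MvPolynomial (Fin 3) ℤ) ∈
      Ideal.span ({2 * X 2 * (X 0 + X 2), (X 2) ^ 2 * (X 0 + X 2),
        24 * (X 0) ^ 2 - 48 * X 1, 20 * X 0 * X 1 - 4 * X 2 * X 1}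
        : Set (MvPolynomial (Fin 3) ℤ)) := Ideal.subset_span (by simp)
  have h3 : (24 * (X 0) ^ 2 - 48 * X 1 : MvPolynomial (Fin 3) ℤ) ∈
      Ideal.span ({2 * X 2 * (X 0 + X 2), (X 2) ^ 2 * (X 0 + X 2),
        24 * (X 0) ^ 2 - 48 * X 1, 20 * X 0 * X 1 - 4 * X 2 * X 1}
        : Set (MvPolynomial (Fin 3) ℤ)) := Ideal.subset_span (by simp)
  have h4 : (20 * X 0 * X 1 - 4 * X 2 * X 1 : MvPolynomial (Fin 3) ℤ) ∈
      Ideal.span ({2 * X 2 * (X 0 + X 2), (X 2) ^ 2 * (X 0 + X 2),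
        24 * (X 0) ^ 2 - 48 * X 1, 20 * X 0 * X 1 - 4 * X 2 * X 1}
        : Set (MvPolynomial (Fin 3) ℤ)) := Ideal.subset_span (by simp)
  have key : (36 * X 1 * ((X 2) ^ 2 - 2 * X 0 * X 2 + 16 * X 1 - 3 * (X 0) ^ 2)
        : MvPolynomial (Fin 3) ℤ) =
      (12 * X 1) * (2 * X 2 * (X 0 + X 2)) + (-(12 * X 1)) * (24 * (X 0) ^ 2 - 48 * X 1)
        + (9 * X 0 - 3 * X 2) * (20 * X 0 * X 1 - 4 * X 2 * X 1) := by ring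
  rw [key]
  exact Ideal.add_mem _ (Ideal.add_mem _ (Ideal.mul_mem_left _ _ h1)
    (Ideal.mul_mem_left _ _ h3)) (Ideal.mul_mem_left _ _ h4)
end

section
/- Let R be the quotient ring ℤ[λ₁,λ₂,δ₁,ξ]/(2ξ, ξ(ξ+λ₁)). Then the top Chern class element δ₁ (an indeterminate) is not a zero divisor in R; more generally, the image of δ₁ in R is a non-zero-divisor. -/
/-!
The relations `2ξ` and `ξ(ξ + λ₁)` do not involve `δ₁`, so the quotient is the polynomial ring
in `δ₁` over `ℤ[λ₁, λ₂, ξ]/(2ξ, ξ(ξ + λ₁))`, and the variable of a polynomial ring is monic,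
hence a non-zero-divisor.
-/

open MvPolynomial

theorem MulEquivClass.map_mem_nonZeroDivisors_iff {M₀ S F : Type*} [EquivLike F M₀ S]
    [MonoidWithZero M₀] [MonoidWithZero S] [MulEquivClass F M₀ S] (f : F) {x : M₀} :
    f x ∈ nonZeroDivisors S ↔ x ∈ nonZeroDivisors M₀ := by
  rw [← MulEquivClass.map_nonZeroDivisors f]
  exact Submonoid.mem_map_iff_mem (EquivLike.injective f)

theorem Polynomial.mk_X_mem_nonZeroDivisors_quotient_map_C {R : Type*} [CommRing R]
    (J : Ideal R) :
    Ideal.Quotient.mk (J.map Polynomial.C) Polynomial.X ∈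
      nonZeroDivisors (Polynomial R ⧸ J.map (Polynomial.C : R →+* Polynomial R)) := by
  rw [← MulEquivClass.map_mem_nonZeroDivisors_iff
      J.polynomialQuotientEquivQuotientPolynomial.symm,
    Ideal.polynomialQuotientEquivQuotientPolynomial_symm_mk, Polynomial.map_X]
  exact Polynomial.monic_X.mem_nonZeroDivisors

theorem MvPolynomial.mk_X_mem_nonZeroDivisors_quotient_map_rename {R σ : Type*} [CommRing R]
    [DecidableEq σ] (i : σ) (J : Ideal (MvPolynomial {j // j ≠ i} R)) :
    Ideal.Quotient.mk (J.map (rename Subtype.val)) (X i) ∈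
      nonZeroDivisors (MvPolynomial σ R ⧸ J.map (rename (R := R) Subtype.val)) := by
  let e : MvPolynomial σ R ≃+* Polynomial (MvPolynomial {j // j ≠ i} R) :=
    ((renameEquiv R (Equiv.optionSubtypeNe i).symm).trans (optionEquivLeft R _)).toRingEquiv
  have he : (e : MvPolynomial σ R →+* _).comp
      (rename (R := R) (Subtype.val : {j // j ≠ i} → σ)).toRingHom = Polynomial.C := by
    refine MvPolynomial.ringHom_ext (fun r => ?_) (fun j => ?_)
    · simp [e, optionEquivLeft_C]
    · simp [e, j.2, optionEquivLeft_X_some]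
  have hJ : J.map Polynomial.C =
      (J.map (rename (R := R) Subtype.val)).map (e : MvPolynomial σ R →+* _) := by
    rw [← he, ← Ideal.map_map]
    rfl
  rw [← MulEquivClass.map_mem_nonZeroDivisors_iff (Ideal.quotientEquiv _ _ e hJ),
    Ideal.quotientEquiv_mk]
  convert Polynomial.mk_X_mem_nonZeroDivisors_quotient_map_C J
  simp [e, optionEquivLeft_X_none]

/-- λ₁ = X 0, λ₂ = X 1, δ₁ = X 2, ξ = X 3. -/
theorem stmt1 :
    Ideal.Quotient.mk
        (Ideal.span ({2 * X 3, X 3 * (X 3 + X 0)} : Set (MvPolynomial (Fin 4) ℤ)))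
        (X 2) ∈
      nonZeroDivisors
        (MvPolynomial (Fin 4) ℤ ⧸
          Ideal.span ({2 * X 3, X 3 * (X 3 + X 0)} : Set (MvPolynomial (Fin 4) ℤ))) := by
  let ξ : {j : Fin 4 // j ≠ 2} := ⟨3, by decide⟩
  let lam₁ : {j : Fin 4 // j ≠ 2} := ⟨0, by decide⟩
  have hI : Ideal.span ({2 * X 3, X 3 * (X 3 + X 0)} : Set (MvPolynomial (Fin 4) ℤ)) =
      (Ideal.span {2 * X ξ, X ξ * (X ξ + X lam₁)}).map (rename (R := ℤ) Subtype.val) := by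
    simp [Ideal.map_span, Set.image_insert_eq, map_ofNat, ξ, lam₁]
  rw [hI]
  exact MvPolynomial.mk_X_mem_nonZeroDivisors_quotient_map_rename 2 _
end

section
/- In the ring S := ℤ[λ₁,λ₂,δ₁,ξ]/(2ξ, ξ(ξ+λ₁)), the intersection of the ideal of relations with the subring generated by λ₁, λ₂, δ₁ and δ₁ξ is generated by 2δ₁ξ and δ₁ξ(λ₁δ₁ + δ₁ξ). Concretely: in ℤ[λ₁,λ₂,δ₁,ξ], the ideal (2ξ, ξ(ξ+λ₁)) intersected with the subring ℤ[λ₁,λ₂,δ₁,δ₁ξ] is the ideal of that subring generated by 2δ₁ξ and δ₁ξ(λ₁δ₁+δ₁ξ). -/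
open MvPolynomial

namespace Stmt16Aux

abbrev R4 := MvPolynomial (Fin 4) ℤ

def good (p : R4) : Prop := ∀ m ∈ p.support, m 3 ≤ m 2

def low (p : R4) : Prop := ∀ m ∈ p.support, m 3 ≤ 1

noncomputable abbrev A : Subalgebra ℤ R4 :=
  Algebra.adjoin ℤ ({X 0, X 1, X 2, X 2 * X 3} : Set R4)

noncomputable abbrev v : R4 := (X 2 * X 3) * (X 0 * X 2 + X 2 * X 3)

noncomputable abbrev u : R4 := 2 * (X 2 * X 3)

lemma good_zero : good 0 := by simp [good]

lemma good_add {p q : R4} (hp : good p) (hq : good q) : good (p + q) := by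
  intro m hm
  rcases Finset.mem_union.1 (MvPolynomial.support_add hm) with h | h
  · exact hp m h
  · exact hq m h

lemma good_neg {p : R4} (hp : good p) : good (-p) := by
  intro m hm
  exact hp m (by simpa using hm)

lemma good_mul {p q : R4} (hp : good p) (hq : good q) : good (p * q) := by
  classical
  intro m hm
  have := MvPolynomial.support_mul p q hm
  rcases Finset.mem_add.1 this with ⟨a, ha, b, hb, rfl⟩
  have := hp a ha
  have := hq b hb
  simp only [Finsupp.add_apply]
  omega

lemma good_monomial {m : Fin 4 →₀ ℕ} (h : m 3 ≤ m 2) (c : ℤ) : good (monomial m c) := by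
  intro n hn
  have : n = m := Finset.mem_singleton.1 (MvPolynomial.support_monomial_subset hn)
  subst this; exact h

lemma low_zero : low 0 := by simp [low]
lemma low_add {p q : R4} (hp : low p) (hq : low q) : low (p + q) := by
  intro m hm
  rcases Finset.mem_union.1 (MvPolynomial.support_add hm) with h | h
  · exact hp m h
  · exact hq m h
lemma low_neg {p : R4} (hp : low p) : low (-p) := fun m hm => hp m (by simpa using hm)
lemma low_monomial {m : Fin 4 →₀ ℕ} (h : m 3 ≤ 1) (c : ℤ) : low (monomial m c) := by
  intro n hn
  have : n = m := Finset.mem_singleton.1 (MvPolynomial.support_monomial_subset hn)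
  subst this; exact h


lemma finsupp4 (m : Fin 4 →₀ ℕ) :
    (Finsupp.single 0 (m 0) + Finsupp.single 1 (m 1) + Finsupp.single 2 (m 2)
      + Finsupp.single 3 (m 3) : Fin 4 →₀ ℕ) = m := by
  ext i
  fin_cases i <;> simp [Finsupp.single_apply]

lemma mono4 (m : Fin 4 →₀ ℕ) (c : ℤ) :
    monomial m c = C c * X 0 ^ m 0 * X 1 ^ m 1 * X 2 ^ m 2 * X 3 ^ m 3 := by
  conv_lhs => rw [← finsupp4 m]
  simp only [X_pow_eq_monomial, monomial_mul, mul_assoc, mul_one, one_mul, C_mul_monomial]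


lemma X2X3 : (X 2 * X 3 : R4) = monomial (Finsupp.single 2 1 + Finsupp.single 3 1) 1 := by
  simp [X, monomial_mul]

lemma monomial_mem {m : Fin 4 →₀ ℕ} (h : m 3 ≤ m 2) (c : ℤ) : monomial m c ∈ A := by
  have h2 : (X 2 : R4) ^ (m 2) = X 2 ^ (m 2 - m 3) * X 2 ^ (m 3) := by
    rw [← pow_add, Nat.sub_add_cancel h]
  have key : monomial m c
      = C c * X 0 ^ m 0 * X 1 ^ m 1 * X 2 ^ (m 2 - m 3) * (X 2 * X 3) ^ m 3 := by
    rw [mono4, h2]; ring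
  rw [key]
  have h0 : (X 0 : R4) ∈ A := Algebra.subset_adjoin (by simp)
  have h1 : (X 1 : R4) ∈ A := Algebra.subset_adjoin (by simp)
  have hx2 : (X 2 : R4) ∈ A := Algebra.subset_adjoin (by simp)
  have h23 : (X 2 * X 3 : R4) ∈ A := Algebra.subset_adjoin (by simp)
  exact mul_mem (mul_mem (mul_mem (mul_mem (A.algebraMap_mem c) (pow_mem h0 _))
    (pow_mem h1 _)) (pow_mem hx2 _)) (pow_mem h23 _)

lemma mem_of_good {p : R4} (hp : good p) : p ∈ A := by
  rw [p.as_sum]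
  exact Subalgebra.sum_mem _ fun m hm => monomial_mem (hp m hm) _


lemma good_C (c : ℤ) : good (C c) := good_monomial (by simp) c

lemma good_X {i : Fin 4} (h : i ≠ 3) : good (X i) := by
  intro m hm
  have : m = Finsupp.single i 1 := Finset.mem_singleton.1 (by rw [← support_X (R := ℤ)]; exact hm)
  subst this
  rw [Finsupp.single_apply, Finsupp.single_apply]
  split <;> rename_i h3
  · exact absurd h3 h
  · exact Nat.zero_le _

lemma good_of_mem {p : R4} (hp : p ∈ A) : good p := by
  induction hp using Algebra.adjoin_induction with
  | mem x hx =>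
    rcases hx with h | h | h | h
    · subst h; exact good_X (by decide)
    · subst h; exact good_X (by decide)
    · subst h; exact good_X (by decide)
    · rw [Set.mem_singleton_iff] at h; subst h
      rw [X2X3]
      exact good_monomial (by simp) 1
  | algebraMap c => exact good_C c
  | add x y _ _ hx hy => exact good_add hx hy
  | mul x y _ _ hx hy => exact good_mul hx hy

lemma key_identity {m : Fin 4 →₀ ℕ} (h2 : 2 ≤ m 2) (h3 : 2 ≤ m 3) (c : ℤ) :
    monomial m c + monomial ((m - (Finsupp.single 2 2 + Finsupp.single 3 2))
        + (Finsupp.single 0 1 + Finsupp.single 2 2 + Finsupp.single 3 1)) c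
      = monomial (m - (Finsupp.single 2 2 + Finsupp.single 3 2)) c * v := by
  set m' := m - (Finsupp.single 2 2 + Finsupp.single 3 2 : Fin 4 →₀ ℕ) with hm'
  have hv : (v : R4) = monomial (Finsupp.single 0 1 + Finsupp.single 2 2 + Finsupp.single 3 1) 1
      + monomial (Finsupp.single 2 2 + Finsupp.single 3 2) 1 := by
    simp only [v, X, monomial_mul, mul_one, add_mul, mul_add]
    refine congrArg₂ (· + ·) ?_ ?_ <;>
      exact congrArg (fun s => (monomial s (1:ℤ))) (by ext i; fin_cases i <;> simp)
  have hmB : m' + (Finsupp.single 2 2 + Finsupp.single 3 2) = m := by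
    ext i
    rw [Finsupp.add_apply, hm', Finsupp.tsub_apply, Finsupp.add_apply]
    fin_cases i <;> simp [Finsupp.single_apply] <;> omega
  rw [hv, mul_add, monomial_mul, monomial_mul, mul_one, hmB, add_comm]
lemma red_monomial (d : ℕ) : ∀ m : Fin 4 →₀ ℕ, m 3 ≤ d → m 3 ≤ m 2 → ∀ c : ℤ,
    ∃ t q : R4, good t ∧ good q ∧ low q ∧ monomial m c = q + t * v := by
  induction d with
  | zero =>
    intro m hd hg c
    exact ⟨0, monomial m c, good_zero, good_monomial hg c, low_monomial (by omega) c, by ring⟩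
  | succ d ih =>
    intro m hd hg c
    by_cases hle : m 3 ≤ 1
    · exact ⟨0, monomial m c, good_zero, good_monomial hg c, low_monomial hle c, by ring⟩
    push_neg at hle
    have h3 : 2 ≤ m 3 := hle
    have h2 : 2 ≤ m 2 := le_trans h3 hg
    set m' := m - (Finsupp.single 2 2 + Finsupp.single 3 2 : Fin 4 →₀ ℕ) with hm'
    set m'' := m' + (Finsupp.single 0 1 + Finsupp.single 2 2 + Finsupp.single 3 1) with hm''
    have hm'app : ∀ i, m' i = m i - (Finsupp.single 2 2 + Finsupp.single 3 2 : Fin 4 →₀ ℕ) i := by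
      intro i; rw [hm', Finsupp.tsub_apply]
    have hm'2 : m' 2 = m 2 - 2 := by rw [hm'app]; simp [Finsupp.single_apply]
    have hm'3 : m' 3 = m 3 - 2 := by rw [hm'app]; simp [Finsupp.single_apply]
    have hm''2 : m'' 2 = m 2 := by rw [hm'']; simp [Finsupp.single_apply, hm'2]; omega
    have hm''3 : m'' 3 = m 3 - 1 := by rw [hm'']; simp [Finsupp.single_apply, hm'3]; omega
    have haux1 : m'' 3 ≤ d := by omega
    have haux2 : m'' 3 ≤ m'' 2 := by omega
    obtain ⟨t', q', ht', hq', hlq', heq⟩ := ih m'' haux1 haux2 c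
    refine ⟨monomial m' c - t', -q', ?_, good_neg hq', low_neg hlq', ?_⟩
    · rw [sub_eq_add_neg]
      exact good_add (good_monomial (m := m') (by omega) c) (good_neg ht')
    · have := key_identity h2 h3 c
      rw [← hm'] at this
      rw [← hm''] at this
      have : monomial m c = monomial m' c * v - monomial m'' c := by linear_combination this
      rw [this, heq]; ring

lemma red {p : R4} (hp : good p) :
    ∃ t q : R4, good t ∧ good q ∧ low q ∧ p = q + t * v := by
  have : ∀ x ∈ p.support, ∃ t q : R4, good t ∧ good q ∧ low q ∧
      monomial x (coeff x p) = q + t * v :=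
    fun x hx => red_monomial (x 3) x le_rfl (hp x hx) _
  rw [p.as_sum]
  refine Finset.sum_induction (fun m => monomial m (coeff m p))
    (fun x => ∃ t q : R4, good t ∧ good q ∧ low q ∧ x = q + t * v) ?_ ?_ this
  · rintro a b ⟨t1, q1, h1, h2, h3, rfl⟩ ⟨t2, q2, h4, h5, h6, rfl⟩
    exact ⟨t1 + t2, q1 + q2, good_add h1 h4, good_add h2 h5, low_add h3 h6, by ring⟩
  · exact ⟨0, 0, good_zero, good_zero, low_zero, by ring⟩

noncomputable def φ : R4 →ₐ[ℤ] R4 := aeval (fun i => if i = 3 then -X 0 else X i)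

lemma φ_fix {p : R4} (hp : ∀ m ∈ p.support, m 3 = 0) : φ p = p := by
  conv_lhs => rw [p.as_sum]
  rw [map_sum]
  conv_rhs => rw [p.as_sum]
  refine Finset.sum_congr rfl fun m hm => ?_
  have h0 := hp m hm
  have hh := mono4 m (coeff m p)
  rw [h0, pow_zero, mul_one] at hh
  rw [hh]
  simp [φ]

lemma step2 {q : R4} (hg : good q) (hl : low q)
    (hq : q ∈ Ideal.span ({2 * X 3, X 3 * (X 3 + X 0)} : Set R4)) :
    ∃ s : R4, good s ∧ q = s * u := by
  obtain ⟨a, b, hab⟩ := Ideal.mem_span_pair.1 hq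
  have hdvd : (X 3 : R4) ∣ q := ⟨2 * a + b * (X 3 + X 0), by rw [← hab]; ring⟩
  set q1 := q.divMonomial (Finsupp.single 3 1) with hq1def
  have hmod : q.modMonomial (Finsupp.single 3 1) = 0 := X_dvd_iff_modMonomial_eq_zero.1 hdvd
  have hqX : q = X 3 * q1 := by
    conv_lhs => rw [← divMonomial_add_modMonomial_single q 3]
    rw [hmod, add_zero, ← hq1def]
  have hsup1 : ∀ n ∈ q1.support, n 3 = 0 ∧ 1 ≤ n 2 := by
    intro n hn
    have hns : (Finsupp.single 3 1 + n) ∈ q.support := by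
      rw [mem_support_iff, ← coeff_divMonomial, ← hq1def]
      exact mem_support_iff.1 hn
    have h1 := hg _ hns
    have h2 := hl _ hns
    simp [Finsupp.add_apply, Finsupp.single_apply] at h1 h2
    omega
  have hφ3 : φ (X 3) = -X 0 := by simp [φ]
  have hφ0 : φ (X 0) = X 0 := by simp [φ]
  have hφq : φ q = -X 0 * q1 := by
    rw [hqX, map_mul, hφ3, φ_fix (fun n hn => (hsup1 n hn).1)]
  have hφq' : φ q = -(2 * X 0 * φ a) := by
    have h2 : φ (2 : R4) = 2 := map_ofNat φ 2
    rw [← hab]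
    simp only [map_add, map_mul]
    rw [hφ3, hφ0, h2]; ring
  have hX0 : (X 0 : R4) ≠ 0 := X_ne_zero 0
  have hq1 : q1 = 2 * φ a := by
    apply mul_left_cancel₀ hX0
    have h := hφq.symm.trans hφq'
    linear_combination -h
  have hsupa : ∀ n ∈ (φ a).support, n 3 = 0 ∧ 1 ≤ n 2 := by
    intro n hn
    refine hsup1 n (mem_support_iff.2 ?_)
    have : coeff n q1 = 2 * coeff n (φ a) := by
      rw [hq1, show ((2 : R4) * φ a) = C 2 * φ a by norm_num, coeff_C_mul]
    rw [this]
    have := mem_support_iff.1 hn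
    omega
  set w := (φ a).divMonomial (Finsupp.single 2 1) with hwdef
  have hmod2 : (φ a).modMonomial (Finsupp.single 2 1) = 0 := by
    ext n
    by_cases h : (Finsupp.single 2 1 : Fin 4 →₀ ℕ) ≤ n
    · rw [coeff_modMonomial_of_le _ h, coeff_zero]
    · rw [coeff_modMonomial_of_not_le _ h, coeff_zero]
      by_contra hc
      exact h (Finsupp.single_le_iff.2 (hsupa n (mem_support_iff.2 hc)).2)
  have hφaX : φ a = X 2 * w := by
    conv_lhs => rw [← divMonomial_add_modMonomial_single (φ a) 2]
    rw [hmod2, add_zero, ← hwdef]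
  refine ⟨w, ?_, ?_⟩
  · intro n hn
    have hns : (Finsupp.single 2 1 + n) ∈ (φ a).support := by
      rw [mem_support_iff, ← coeff_divMonomial, ← hwdef]
      exact mem_support_iff.1 hn
    have := (hsupa _ hns).1
    simp [Finsupp.add_apply, Finsupp.single_apply] at this
    omega
  · rw [hqX, hq1, hφaX]; ring

end Stmt16Aux

open Stmt16Aux in
/-- λ₁ = X 0, λ₂ = X 1, δ₁ = X 2, ξ = X 3.  In ℤ[λ₁,λ₂,δ₁,ξ], the intersection of the
ideal `(2ξ, ξ(ξ+λ₁))` with the subring `ℤ[λ₁,λ₂,δ₁,δ₁ξ]` is the ideal of that subring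
generated by `2δ₁ξ` and `δ₁ξ(λ₁δ₁+δ₁ξ)`. -/
theorem stmt16 :
    ∀ p : MvPolynomial (Fin 4) ℤ,
      p ∈ Algebra.adjoin ℤ ({X 0, X 1, X 2, X 2 * X 3} : Set (MvPolynomial (Fin 4) ℤ)) →
      (p ∈ Ideal.span ({2 * X 3, X 3 * (X 3 + X 0)} : Set (MvPolynomial (Fin 4) ℤ)) ↔
        ∃ s ∈ Algebra.adjoin ℤ ({X 0, X 1, X 2, X 2 * X 3} : Set (MvPolynomial (Fin 4) ℤ)),
        ∃ t ∈ Algebra.adjoin ℤ ({X 0, X 1, X 2, X 2 * X 3} : Set (MvPolynomial (Fin 4) ℤ)),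
          p = s * (2 * (X 2 * X 3)) + t * ((X 2 * X 3) * (X 0 * X 2 + X 2 * X 3))) := by
  intro p hpA
  constructor
  · intro hpI
    obtain ⟨t, q, ht, hq, hlq, hpqt⟩ := red (good_of_mem hpA)
    have hvI : (v : R4) ∈ Ideal.span ({2 * X 3, X 3 * (X 3 + X 0)} : Set R4) :=
      Ideal.mem_span_pair.2 ⟨0, X 2 * X 2, by ring⟩
    have hqI : q ∈ Ideal.span ({2 * X 3, X 3 * (X 3 + X 0)} : Set R4) := by
      have : q = p - t * v := by rw [hpqt]; ring
      rw [this]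
      exact Ideal.sub_mem _ hpI (Ideal.mul_mem_left _ _ hvI)
    obtain ⟨s, hs, hqs⟩ := step2 hq hlq hqI
    exact ⟨s, mem_of_good hs, t, mem_of_good ht, by rw [hpqt, hqs]⟩
  · rintro ⟨s, -, t, -, rfl⟩
    exact Ideal.mem_span_pair.2 ⟨s * X 2, t * (X 2 * X 2), by ring⟩
end
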